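/- arXiv:1103.5127 — 4 statements merged into one kernel-verified Lean document; each statement's English description precedes it below -/
import Mathlib

section
/- If G is a simple connected graph of even size (i.e., with an even number of edges), then there exists an edge-friendly binary edge labeling f of G which is strongly edge-balanced, that is, e_f(0) = e_f(1) and v_f(0) = v_f(1). -/
/-!
Edge-friendly labelings (Krop, Lee, Raridan).  A binary edge labeling of a
graph `G` is `f : Sym2 V → Fin 2` (only its values on edges matter).  For
`i : Fin 2`, `nbr G f i v` is the set `N_i(v)` of neighbors of `v` joined to
`v` by an `i`-edge, `edgeCount G f i` is `e_f(i)`, and `vertexLabel G f v` is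
the induced partial vertex label `f⁺(v)` (with `none` meaning unlabeled).
-/

open Finset

attribute [local instance] Classical.propDecidable

noncomputable section

namespace EdgeLabeling

variable {V : Type*} [Fintype V]

/-- `N_i(v)`: neighbors of `v` joined to `v` by an edge labeled `i`. -/
def nbr (G : SimpleGraph V) (f : Sym2 V → Fin 2) (i : Fin 2) (v : V) : Finset V :=
  Finset.univ.filter fun u => G.Adj v u ∧ f s(v, u) = i

/-- `e_f(i)`: the number of edges of `G` labeled `i`. -/
def edgeCount (G : SimpleGraph V) (f : Sym2 V → Fin 2) (i : Fin 2) : ℕ :=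
  (G.edgeFinset.filter fun e => f e = i).card

/-- `f` is edge-friendly: `|e_f(0) - e_f(1)| ≤ 1`. -/
def EdgeFriendly (G : SimpleGraph V) (f : Sym2 V → Fin 2) : Prop :=
  |(edgeCount G f 0 : ℤ) - (edgeCount G f 1 : ℤ)| ≤ 1

/-- The induced partial vertex labeling `f⁺`. -/
def vertexLabel (G : SimpleGraph V) (f : Sym2 V → Fin 2) (v : V) : Option (Fin 2) :=
  if (nbr G f 1 v).card < (nbr G f 0 v).card then some 0
  else if (nbr G f 0 v).card < (nbr G f 1 v).card then some 1
  else none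

/-- `v` is unlabeled under the induced partial vertex labeling. -/
def Unlabeled (G : SimpleGraph V) (f : Sym2 V → Fin 2) (v : V) : Prop :=
  vertexLabel G f v = none

/-- `v_f(i)`: the number of vertices labeled `i` by `f⁺`. -/
def vertexCount (G : SimpleGraph V) (f : Sym2 V → Fin 2) (i : Fin 2) : ℕ :=
  (Finset.univ.filter fun v => vertexLabel G f v = some i).card

/-- `G` is opinionated: some edge-friendly labeling leaves no vertex unlabeled. -/
def Opinionated (G : SimpleGraph V) : Prop :=
  ∃ f : Sym2 V → Fin 2, EdgeFriendly G f ∧ ∀ v : V, ¬ Unlabeled G f v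

end EdgeLabeling


/-
Orient the edges of `G` so that every in-degree is even: starting from any orientation, reverse
the edges along a walk from each odd vertex to a fixed root, which changes the parity of the
in-degree only at the two ends; the root is then even as well because `G` has an even number of
edges. Pairing the edges that enter each vertex decomposes `G` into two-paths `a - u - b`.
Labeling `au` with `0` and `ub` with `1` gives `e_f(0) = e_f(1)`, and `|N₀(v)| - |N₁(v)|`
becomes the out-degree minus the in-degree of `v` in the multigraph of arcs `a → b`. Every
multigraph has an orientation in which these differ by at most one at each vertex, so after
reversing two-paths accordingly every vertex imbalance lies in `{-1, 0, 1}` and they sum to `0`: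
as many vertices are labeled `0` as `1`.
-/

theorem Multiset.exists_map_fst_add_map_snd_eq {α : Type*} (s : Multiset α)
    (h : Even (Multiset.card s)) :
    ∃ P : Multiset (α × α), P.map Prod.fst + P.map Prod.snd = s := by
  induction s using Quot.inductionOn with
  | h l =>
  obtain ⟨k, hk⟩ := h
  refine ⟨((l.take k).zip (l.drop k) : List (α × α)), ?_⟩
  simp only [Multiset.quot_mk_to_coe'', Multiset.coe_card, Multiset.map_coe,
    Multiset.coe_add] at hk ⊢
  rw [List.map_fst_zip (by simp; omega), List.map_snd_zip (by simp; omega),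
    List.take_append_drop]

theorem Multiset.bind_univ_filter_eq {α β : Type*} [Fintype β] (m : Multiset α) (g : α → β) :
    (Finset.univ.val.bind fun b => m.filter (g · = b)) = m := by
  classical
  ext a
  simp [Multiset.count_bind, Multiset.count_filter]

theorem Multiset.exists_eq_cons_cons_of_one_lt_card_filter {α : Type*} {P : α → Prop}
    [DecidablePred P] {M : Multiset α} (h : 1 < Multiset.card (M.filter P)) :
    ∃ p q R, M = p ::ₘ q ::ₘ R ∧ P p ∧ P q := by
  obtain ⟨p, hp⟩ := Multiset.card_pos_iff_exists_mem.mp (zero_lt_one.trans h)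
  obtain ⟨q, hq⟩ := Multiset.card_pos_iff_exists_mem.mp <| by
    rwa [Multiset.card_erase_of_mem hp, Nat.pred_eq_sub_one, Nat.sub_pos_iff_lt]
  have hqM : q ∈ M.erase p :=
    Multiset.mem_of_le (Multiset.erase_le_erase p (Multiset.filter_le P M)) hq
  refine ⟨p, q, (M.erase p).erase q, ?_, (Multiset.mem_filter.mp hp).2,
    (Multiset.mem_filter.mp (Multiset.mem_of_mem_erase hq)).2⟩
  rw [Multiset.cons_erase hqM, Multiset.cons_erase (Multiset.mem_of_mem_filter hp)]

namespace EdgeLabeling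

variable {V : Type*}

section Imbalance

variable [Fintype V] (G : SimpleGraph V) (f : Sym2 V → Fin 2)

def imbalance (v : V) : ℤ := #(nbr G f 0 v) - #(nbr G f 1 v)

lemma vertexLabel_eq_some_zero_iff (v : V) :
    vertexLabel G f v = some 0 ↔ 0 < imbalance G f v := by
  unfold vertexLabel imbalance; split_ifs <;> simp <;> omega

lemma vertexLabel_eq_some_one_iff (v : V) :
    vertexLabel G f v = some 1 ↔ imbalance G f v < 0 := by
  unfold vertexLabel imbalance; split_ifs <;> simp <;> omega

theorem vertexCount_eq_of_sum_imbalance_eq_zero (hsum : ∑ v, imbalance G f v = 0)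
    (hbal : ∀ v, |imbalance G f v| ≤ 1) : vertexCount G f 0 = vertexCount G f 1 := by
  have hsign : ∀ v, imbalance G f v =
      (if 0 < imbalance G f v then 1 else 0) - (if imbalance G f v < 0 then 1 else 0) := by
    intro v
    have := abs_le.mp (hbal v)
    split_ifs <;> omega
  rw [Finset.sum_congr rfl fun v _ => hsign v, Finset.sum_sub_distrib, Finset.sum_boole,
    Finset.sum_boole, sub_eq_zero] at hsum
  simp only [vertexCount, vertexLabel_eq_some_zero_iff, vertexLabel_eq_some_one_iff]
  exact_mod_cast hsum

lemma card_nbr_eq_card_filter (i : Fin 2) (v : V) :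
    #(nbr G f i v) = #(G.edgeFinset.filter fun e => v ∈ e ∧ f e = i) := by
  rw [← Finset.card_image_of_injective _ fun _ _ => Sym2.congr_right.mp]
  congr 1
  ext e
  simp only [nbr, Finset.mem_image, Finset.mem_filter, Finset.mem_univ, true_and,
    SimpleGraph.mem_edgeFinset]
  constructor
  · rintro ⟨u, ⟨hadj, hu⟩, rfl⟩
    exact ⟨hadj, Sym2.mem_mk_left v u, hu⟩
  · rintro ⟨he, hv, hi⟩
    obtain ⟨u, rfl⟩ := Sym2.mem_iff_exists.mp hv
    exact ⟨u, ⟨he, hi⟩, rfl⟩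

lemma imbalance_eq_sum (v : V) : imbalance G f v = ∑ e ∈ G.edgeFinset,
    ((if v ∈ e ∧ f e = 0 then 1 else 0) - (if v ∈ e ∧ f e = 1 then 1 else 0)) := by
  rw [imbalance, card_nbr_eq_card_filter, card_nbr_eq_card_filter, Finset.sum_sub_distrib,
    Finset.natCast_card_filter, Finset.natCast_card_filter]

end Imbalance

section NetOut

def outSign (v : V) (p : V × V) : ℤ :=
  (if p.1 = v then 1 else 0) - (if p.2 = v then 1 else 0)

def netOut (M : Multiset (V × V)) (v : V) : ℤ :=
  (M.map (outSign v)).sum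

@[simp]
lemma netOut_zero (v : V) : netOut 0 v = 0 := by
  simp [netOut]

@[simp]
lemma netOut_cons (p : V × V) (M : Multiset (V × V)) (v : V) :
    netOut (p ::ₘ M) v = outSign v p + netOut M v := by
  simp [netOut]

lemma netOut_add (M N : Multiset (V × V)) (v : V) :
    netOut (M + N) v = netOut M v + netOut N v := by
  simp [netOut]

lemma abs_outSign_le_one (v : V) (p : V × V) : |outSign v p| ≤ 1 := by
  unfold outSign; split_ifs <;> simp

lemma outSign_eq_zero_of_notMem {v : V} {p : V × V} (h : v ∉ s(p.1, p.2)) :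
    outSign v p = 0 := by
  have h1 : p.1 ≠ v := fun e => h (e ▸ Sym2.mem_mk_left _ _)
  have h2 : p.2 ≠ v := fun e => h (e ▸ Sym2.mem_mk_right _ _)
  simp [outSign, h1, h2]

lemma outSign_add_outSign (w a v b : V) :
    outSign w (a, v) + outSign w (v, b) = outSign w (a, b) := by
  simp only [outSign]; ring

lemma ite_mem_sub_ite_mem_eq_outSign {a u b : V} (hau : a ≠ u) (hub : u ≠ b) (v : V) :
    ((if v ∈ s(a, u) then 1 else 0) - (if v ∈ s(u, b) then 1 else 0) : ℤ) =
      outSign v (a, b) := by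
  simp only [Sym2.mem_iff, outSign]
  split_ifs <;> grind

lemma sum_netOut [Fintype V] (M : Multiset (V × V)) : ∑ v, netOut M v = 0 := by
  induction M using Multiset.induction with
  | empty => simp
  | cons p M ih => simp [Finset.sum_add_distrib, ih, outSign, Finset.sum_sub_distrib]

lemma abs_netOut_le_one_of_card_filter_le_one {M : Multiset (V × V)} {v : V}
    (h : Multiset.card (M.filter fun p => v ∈ s(p.1, p.2)) ≤ 1) : |netOut M v| ≤ 1 := by
  have hrest : netOut (M.filter fun p => v ∉ s(p.1, p.2)) v = 0 :=
    Multiset.sum_eq_zero fun z hz => by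
      obtain ⟨p, hp, rfl⟩ := Multiset.mem_map.mp hz
      exact outSign_eq_zero_of_notMem (Multiset.mem_filter.mp hp).2
  rw [← Multiset.filter_add_not (fun p => v ∈ s(p.1, p.2)) M, netOut_add, hrest, add_zero]
  rcases Nat.le_one_iff_eq_zero_or_eq_one.mp h with h | h
  · rw [Multiset.card_eq_zero.mp h]; simp
  · obtain ⟨p, hp⟩ := Multiset.card_eq_one.mp h
    rw [hp, ← Multiset.cons_zero, netOut_cons, netOut_zero, add_zero]
    exact abs_outSign_le_one v p

theorem exists_reorientation_abs_netOut_le_one (M : Multiset (V × V)) :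
    ∃ M', Multiset.Rel (fun p q => s(p.1, p.2) = s(q.1, q.2)) M' M ∧
      ∀ v, |netOut M' v| ≤ 1 := by
  induction hn : Multiset.card M using Nat.strong_induction_on generalizing M with
  | _ n ih =>
  by_cases hbase : ∀ v, Multiset.card (M.filter fun p => v ∈ s(p.1, p.2)) ≤ 1
  · exact ⟨M, Multiset.rel_refl_of_refl_on fun _ _ => rfl,
      fun v => abs_netOut_le_one_of_card_filter_le_one (hbase v)⟩
  obtain ⟨v, hv⟩ := not_forall.mp hbase
  obtain ⟨p, q, R, rfl, hp, hq⟩ :=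
    Multiset.exists_eq_cons_cons_of_one_lt_card_filter (not_le.mp hv)
  obtain ⟨x, hx⟩ := Sym2.mem_iff_exists.mp hp
  obtain ⟨y, hy⟩ := Sym2.mem_iff_exists.mp hq
  -- Split off the edges `vx` and `vy` into one edge `xy`, orient, and route the arc back via `v`.
  obtain ⟨M', hrel, hbal⟩ := ih _ (by simp only [Multiset.card_cons] at hn ⊢; omega)
    ((x, y) ::ₘ R) rfl
  obtain ⟨r, R', hr, hR', rfl⟩ := Multiset.rel_cons_right.mp hrel
  refine ⟨(r.1, v) ::ₘ (v, r.2) ::ₘ R', ?_, fun w => ?_⟩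
  · rcases Sym2.mk_eq_mk_iff.mp hr with rfl | rfl
    · exact (hR'.cons (by simp [hy])).cons (by simp [hx, Sym2.eq_swap])
    · rw [Multiset.cons_swap p]
      exact (hR'.cons (by simp [hx])).cons (by simp [hy, Sym2.eq_swap])
  · simpa [← add_assoc, outSign_add_outSign] using hbal w

end NetOut

section Orientation

def IsOrientation (o : Sym2 V → V × V) : Prop := ∀ e, s((o e).1, (o e).2) = e

variable [Fintype V] (G : SimpleGraph V)

def inDeg (o : Sym2 V → V × V) (v : V) : ℕ := #(G.edgeFinset.filter fun e => (o e).2 = v)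

variable {G}

lemma IsOrientation.exists_flip {o : Sym2 V → V × V} (ho : IsOrientation o) {u v : V}
    (huv : G.Adj u v) : ∃ o', IsOrientation o' ∧ ∀ z, (inDeg G o' z : ZMod 2) =
      inDeg G o z + (if z = u then 1 else 0) + (if z = v then 1 else 0) := by
  have he : s(u, v) ∈ G.edgeFinset := G.mem_edgeFinset.mpr huv
  refine ⟨Function.update o s(u, v) (o s(u, v)).swap, fun e => ?_, fun z => ?_⟩
  · rcases eq_or_ne e s(u, v) with rfl | hne
    · simpa [Sym2.eq_swap] using ho s(u, v)
    · simpa [hne] using ho e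
  · simp only [inDeg, Finset.natCast_card_filter, ← Finset.add_sum_erase _ _ he]
    rw [Finset.sum_congr rfl fun e he' => by
      rw [Function.update_of_ne (Finset.ne_of_mem_erase he')]]
    rcases (Sym2.mk_eq_mk_iff (q := (u, v))).mp (ho s(u, v)) with h | h
    all_goals
      simp only [Function.update_self, h, Prod.swap]
      split_ifs <;> grind

lemma IsOrientation.exists_flip_walk {o : Sym2 V → V × V} (ho : IsOrientation o) {x y : V}
    (w : G.Walk x y) : ∃ o', IsOrientation o' ∧ ∀ z, (inDeg G o' z : ZMod 2) =
      inDeg G o z + (if z = x then 1 else 0) + (if z = y then 1 else 0) := by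
  induction w generalizing o with
  | nil => exact ⟨o, ho, fun z => by rw [add_assoc, CharTwo.add_self_eq_zero, add_zero]⟩
  | cons huv w ih =>
    obtain ⟨o₁, ho₁, h₁⟩ := ho.exists_flip huv
    obtain ⟨o₂, ho₂, h₂⟩ := ih ho₁
    refine ⟨o₂, ho₂, fun z => ?_⟩
    rw [h₂, h₁]
    grind

theorem exists_isOrientation_even_inDeg (hconn : G.Connected) (hE : Even #G.edgeFinset) :
    ∃ o, IsOrientation o ∧ ∀ v, Even (inDeg G o v) := by
  obtain ⟨r⟩ := hconn.nonempty
  have hfixed : ∀ S : Finset V, ∃ o, IsOrientation o ∧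
      ∀ z ∈ S, z ≠ r → (inDeg G o z : ZMod 2) = 0 := by
    intro S
    induction S using Finset.induction_on with
    | empty => exact ⟨Quot.out, Quot.out_eq, by simp⟩
    | insert a S haS ih =>
      obtain ⟨o, ho, hS⟩ := ih
      by_cases ha : a = r ∨ (inDeg G o a : ZMod 2) = 0
      · refine ⟨o, ho, fun z hz hzr => ?_⟩
        rcases Finset.mem_insert.mp hz with rfl | hz
        exacts [ha.resolve_left hzr, hS z hz hzr]
      · obtain ⟨har, hodd⟩ := not_or.mp ha
        obtain ⟨w⟩ := hconn.preconnected a r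
        obtain ⟨o', ho', h'⟩ := ho.exists_flip_walk w
        refine ⟨o', ho', fun z hz hzr => ?_⟩
        rw [h', if_neg hzr]
        rcases Finset.mem_insert.mp hz with rfl | hz
        · simpa using (by decide : ∀ x : ZMod 2, x ≠ 0 → x + 1 = 0) _ hodd
        · rw [hS z hz hzr, if_neg (ne_of_mem_of_not_mem hz haS)]; simp
  obtain ⟨o, ho, hzero⟩ := hfixed Finset.univ
  refine ⟨o, ho, fun v => (ZMod.natCast_eq_zero_iff_even).mp ?_⟩
  have hsum : ∑ z, (inDeg G o z : ZMod 2) = 0 := by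
    rw [← Nat.cast_sum, (ZMod.natCast_eq_zero_iff_even).mpr]
    convert hE using 1
    exact (Finset.card_eq_sum_card_fiberwise fun _ _ => Finset.mem_univ _).symm
  have hroot : (inDeg G o r : ZMod 2) = 0 := by
    rwa [Finset.sum_eq_single r (fun z _ hzr => hzero z (Finset.mem_univ z) hzr)
      (by simp)] at hsum
  rcases eq_or_ne v r with rfl | hvr
  exacts [hroot, hzero v (Finset.mem_univ v) hvr]

end Orientation

section TwoPath

-- A triple `(a, u, b)` stands for the two-path `a - u - b`.
variable (t : V × V × V)

def fstEdge : Sym2 V := s(t.1, t.2.1)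

def sndEdge : Sym2 V := s(t.2.1, t.2.2)

def ends : V × V := (t.1, t.2.2)

end TwoPath

def IsTwoPathDecomposition [Fintype V] (G : SimpleGraph V) (T : Multiset (V × V × V)) : Prop :=
  T.map fstEdge + T.map sndEdge = G.edgeFinset.val

theorem IsOrientation.exists_isTwoPathDecomposition [Fintype V] {G : SimpleGraph V}
    {o : Sym2 V → V × V} (ho : IsOrientation o) (heven : ∀ v, Even (inDeg G o v)) :
    ∃ T, IsTwoPathDecomposition G T := by
  choose P hP using fun v => Multiset.exists_map_fst_add_map_snd_eq
    (G.edgeFinset.filter fun e => (o e).2 = v).val (heven v)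
  set Q := Finset.univ.val.bind P
  have hQ : Q.map Prod.fst + Q.map Prod.snd = G.edgeFinset.val := by
    rw [Multiset.map_bind, Multiset.map_bind, ← Multiset.bind_add]
    simp only [hP, Finset.filter_val]
    exact Multiset.bind_univ_filter_eq _ _
  have hhead : ∀ p ∈ Q, (o p.1).2 = (o p.2).2 := by
    intro p hp
    obtain ⟨v, -, hv⟩ := Multiset.mem_bind.mp hp
    have h₁ : p.1 ∈ (P v).map Prod.fst + (P v).map Prod.snd :=
      Multiset.mem_add.mpr (.inl (Multiset.mem_map_of_mem _ hv))
    have h₂ : p.2 ∈ (P v).map Prod.fst + (P v).map Prod.snd :=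
      Multiset.mem_add.mpr (.inr (Multiset.mem_map_of_mem _ hv))
    rw [hP v, Finset.mem_val, Finset.mem_filter] at h₁ h₂
    rw [h₁.2, h₂.2]
  refine ⟨Q.map fun p => ((o p.1).1, (o p.1).2, (o p.2).1), ?_⟩
  rw [IsTwoPathDecomposition, ← hQ, Multiset.map_map, Multiset.map_map]
  congr 1
  · exact Multiset.map_congr rfl fun p _ => ho p.1
  · refine Multiset.map_congr rfl fun p hp => ?_
    simp only [Function.comp_apply, sndEdge, hhead p hp]
    rw [Sym2.eq_swap]
    exact ho p.2

lemma exists_map_ends_eq_of_rel {M : Multiset (V × V)} {T : Multiset (V × V × V)}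
    (h : Multiset.Rel (fun p t => s(p.1, p.2) = s((ends t).1, (ends t).2)) M T) :
    ∃ T' : Multiset (V × V × V), T'.map ends = M ∧
      T'.map fstEdge + T'.map sndEdge = T.map fstEdge + T.map sndEdge := by
  induction h with
  | zero => exact ⟨0, by simp, by simp⟩
  | @cons p t M T hpt _ ih =>
    obtain ⟨T', hends, hedges⟩ := ih
    refine ⟨(p.1, t.2.1, p.2) ::ₘ T', by simp [ends, hends], ?_⟩
    rcases Sym2.mk_eq_mk_iff.mp hpt with rfl | rfl
    · simp [fstEdge, sndEdge, ends, hedges]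
    · simp only [ends, Prod.fst_swap, Prod.snd_swap, Multiset.map_cons, fstEdge, sndEdge,
        Multiset.cons_add, Multiset.add_cons, hedges]
      rw [Multiset.cons_swap, Sym2.eq_swap (a := t.2.1), Sym2.eq_swap (a := t.2.2)]

lemma IsTwoPathDecomposition.exists_map_ends_eq [Fintype V] {G : SimpleGraph V}
    {T : Multiset (V × V × V)} (hT : IsTwoPathDecomposition G T) {M : Multiset (V × V)}
    (hM : Multiset.Rel (fun p q => s(p.1, p.2) = s(q.1, q.2)) M (T.map ends)) :
    ∃ T' : Multiset (V × V × V), IsTwoPathDecomposition G T' ∧ T'.map ends = M := by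
  obtain ⟨T', hends, hedges⟩ := exists_map_ends_eq_of_rel <|
    (Multiset.rel_map_right (r := fun p q : V × V => s(p.1, p.2) = s(q.1, q.2)) (f := ends)).mp hM
  exact ⟨T', hedges.trans hT, hends⟩

def labelingOf (T : Multiset (V × V × V)) (e : Sym2 V) : Fin 2 :=
  if e ∈ T.map fstEdge then 0 else 1

lemma labelingOf_fstEdge {t : V × V × V} {T : Multiset (V × V × V)} (ht : t ∈ T) :
    labelingOf T (fstEdge t) = 0 :=
  if_pos (Multiset.mem_map_of_mem _ ht)

namespace IsTwoPathDecomposition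

variable [Fintype V] {G : SimpleGraph V} {T : Multiset (V × V × V)}

lemma adj_fst (hT : IsTwoPathDecomposition G T) {t : V × V × V} (ht : t ∈ T) :
    G.Adj t.1 t.2.1 := by
  have : fstEdge t ∈ G.edgeFinset.val :=
    hT ▸ Multiset.mem_add.mpr (.inl (Multiset.mem_map_of_mem _ ht))
  simpa [fstEdge] using this

lemma adj_snd (hT : IsTwoPathDecomposition G T) {t : V × V × V} (ht : t ∈ T) :
    G.Adj t.2.1 t.2.2 := by
  have : sndEdge t ∈ G.edgeFinset.val :=
    hT ▸ Multiset.mem_add.mpr (.inr (Multiset.mem_map_of_mem _ ht))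
  simpa [sndEdge] using this

lemma labelingOf_sndEdge (hT : IsTwoPathDecomposition G T) {t : V × V × V} (ht : t ∈ T) :
    labelingOf T (sndEdge t) = 1 := by
  have hnodup : (T.map fstEdge + T.map sndEdge).Nodup := hT ▸ G.edgeFinset.nodup
  exact if_neg fun h => Multiset.disjoint_left.mp (Multiset.nodup_add.mp hnodup).2.2 h
    (Multiset.mem_map_of_mem _ ht)

theorem edgeCount_labelingOf (hT : IsTwoPathDecomposition G T) :
    edgeCount G (labelingOf T) 0 = edgeCount G (labelingOf T) 1 := by
  have h0 : ∀ t ∈ T, labelingOf T (fstEdge t) ≠ 1 := fun t ht => by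
    simp [labelingOf_fstEdge ht]
  have h1 : ∀ t ∈ T, labelingOf T (sndEdge t) ≠ 0 := fun t ht => by
    simp [hT.labelingOf_sndEdge ht]
  rw [edgeCount, edgeCount, Finset.card_def, Finset.card_def, Finset.filter_val,
    Finset.filter_val, ← hT]
  simp only [Multiset.filter_add, Multiset.filter_map, Multiset.card_add, Multiset.card_map,
    Function.comp_def]
  rw [Multiset.filter_eq_self.mpr fun t ht => labelingOf_fstEdge ht,
    Multiset.filter_eq_nil.mpr h1, Multiset.filter_eq_nil.mpr h0,
    Multiset.filter_eq_self.mpr fun t ht => hT.labelingOf_sndEdge ht, Multiset.card_zero,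
    add_zero, zero_add]

theorem imbalance_labelingOf (hT : IsTwoPathDecomposition G T) (v : V) :
    imbalance G (labelingOf T) v = netOut (T.map ends) v := by
  rw [imbalance_eq_sum, Finset.sum_eq_multiset_sum, ← hT, Multiset.map_add, Multiset.sum_add,
    Multiset.map_map, Multiset.map_map, ← Multiset.sum_map_add, netOut, Multiset.map_map]
  refine congrArg Multiset.sum (Multiset.map_congr rfl fun t ht => ?_)
  simp only [Function.comp_apply, labelingOf_fstEdge ht, hT.labelingOf_sndEdge ht, and_true,
    Fin.zero_eq_one_iff, Fin.one_eq_zero_iff]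
  simpa [fstEdge, sndEdge, ends, sub_eq_add_neg] using
    ite_mem_sub_ite_mem_eq_outSign (hT.adj_fst ht).ne (hT.adj_snd ht).ne v

end IsTwoPathDecomposition

end EdgeLabeling

open EdgeLabeling

/-- Every simple connected graph of even size admits an
edge-friendly labeling that is strongly edge-balanced:
`e_f(0) = e_f(1)` and `v_f(0) = v_f(1)`. -/
theorem connected_even_size_strongly_edge_balanced
    {V : Type*} [Fintype V] (G : SimpleGraph V)
    (hconn : G.Connected) (hsize : Even G.edgeFinset.card) :
    ∃ f : Sym2 V → Fin 2, EdgeFriendly G f ∧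
      edgeCount G f 0 = edgeCount G f 1 ∧
      vertexCount G f 0 = vertexCount G f 1 := by
  obtain ⟨o, ho, heven⟩ := exists_isOrientation_even_inDeg hconn hsize
  obtain ⟨T, hT⟩ := ho.exists_isTwoPathDecomposition heven
  obtain ⟨M, hM, hbal⟩ := exists_reorientation_abs_netOut_le_one (T.map ends)
  obtain ⟨T', hT', rfl⟩ := hT.exists_map_ends_eq hM
  have hedge := hT'.edgeCount_labelingOf
  refine ⟨labelingOf T', by simp [EdgeFriendly, hedge], hedge, ?_⟩
  apply vertexCount_eq_of_sum_imbalance_eq_zero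
  · simpa only [hT'.imbalance_labelingOf] using sum_netOut _
  · simpa only [hT'.imbalance_labelingOf] using hbal
end
end

section
/- If G is a simple connected graph of even size (i.e., with an even number of edges), then there exists an edge-friendly binary edge labeling f of G with e_f(0) = e_f(1) and |v_f(0) − v_f(1)| ≤ 1 such that every vertex of even degree is unlabeled under the induced partial vertex labeling f⁺. -/
/-!
Edge-friendly labelings (Krop, Lee, Raridan).  A binary edge labeling of a
graph `G` is `f : Sym2 V → Fin 2` (only its values on edges matter).  For
`i : Fin 2`, `nbr G f i v` is the set `N_i(v)` of neighbors of `v` joined to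
`v` by an `i`-edge, `edgeCount G f i` is `e_f(i)`, and `vertexLabel G f v` is
the induced partial vertex label `f⁺(v)` (with `none` meaning unlabeled).
-/

open Finset

attribute [local instance] Classical.propDecidable

noncomputable section

/-!
If every degree is even, label the edges of an Eulerian circuit alternately `0, 1, 0, 1, …`.
The circuit has even length, so each passage through a vertex uses one `0`-edge and one
`1`-edge, and every vertex is unlabeled. Otherwise join a new apex vertex to the (evenly many)
odd-degree vertices: the resulting graph is connected, has even degrees and even size, so it
carries such a labeling. Restricted to `G`, it leaves even-degree vertices unlabeled and gives
each odd-degree vertex the label opposite to that of its apex edge, so balance at the apex gives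
`v_f(0) = v_f(1)`. Finally, counting endpoints of `i`-edges gives
`2 (e_f(0) - e_f(1)) = v_f(0) - v_f(1)` whenever every vertex has imbalance at most one.
-/

namespace SimpleGraph

variable {V : Type*} {G : SimpleGraph V}

namespace Walk

theorem IsTrail.exists_adj_notMem_edges [Fintype V] {u v : V} {p : G.Walk u v}
    (hp : p.IsTrail) (huv : u ≠ v) (hu : Even (G.degree u)) :
    ∃ w, G.Adj u w ∧ s(u, w) ∉ p.edges := by
  by_contra! hall
  have hused : (p.edges.filter (u ∈ ·)).toFinset = G.incidenceFinset u := by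
    ext e
    simp only [List.mem_toFinset, List.mem_filter, decide_eq_true_eq, mem_incidenceFinset]
    refine ⟨fun ⟨he, hue⟩ => ⟨p.edges_subset_edgeSet he, hue⟩, fun ⟨he, hue⟩ => ?_⟩
    obtain ⟨w, rfl⟩ := Sym2.mem_iff_exists.mp hue
    exact ⟨hall w he, hue⟩
  have hcount : p.edges.countP (u ∈ ·) = G.degree u := by
    rw [← card_incidenceFinset_eq_degree, ← hused, List.countP_eq_length_filter,
      List.toFinset_card_of_nodup (hp.edges_nodup.filter _)]
  exact ((hp.even_countP_edges_iff u).mp (hcount ▸ hu) huv).1 rfl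

theorem exists_mem_support_adj_notMem_edges (hG : G.Connected) {u v : V} (p : G.Walk u v)
    {e : Sym2 V} (he : e ∈ G.edgeSet) (hne : e ∉ p.edges) :
    ∃ y ∈ p.support, ∃ w, G.Adj y w ∧ s(y, w) ∉ p.edges := by
  by_contra! hsat
  induction e using Sym2.ind with | _ a b => ?_
  let S : Set V := {y | ∀ w, G.Adj y w → s(y, w) ∈ p.edges}
  obtain ⟨d, -, hd, hd'⟩ := (hG u a).some.exists_boundary_dart S (hsat u p.start_mem_support)
    fun ha => hne (ha b he)
  exact hd' (hsat _ (p.snd_mem_support_of_mem_edges (hd _ d.adj)))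

end Walk

-- A longest trail is closed (otherwise parity gives an unused edge at its start) and uses
-- every edge (otherwise connectivity gives an unused edge at a vertex of it, which can be
-- prepended to a rotation of the trail).
open Walk in
theorem Connected.exists_isEulerian_of_even_degree [Fintype V] (hG : G.Connected)
    (hdeg : ∀ v, Even (G.degree v)) : ∃ (u : V) (p : G.Walk u u), p.IsEulerian := by
  obtain ⟨x⟩ := hG.nonempty
  let IsTrailLength (n : ℕ) : Prop := ∃ (u v : V) (p : G.Walk u v), p.IsTrail ∧ p.length = n
  set m := Nat.findGreatest IsTrailLength G.edgeFinset.card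
  have hmax {u v : V} (q : G.Walk u v) (hq : q.IsTrail) : q.length ≤ m :=
    Nat.le_findGreatest hq.length_le_card_edgeFinset ⟨u, v, q, hq, rfl⟩
  obtain ⟨u, v, p, hp, hlen⟩ : IsTrailLength m :=
    Nat.findGreatest_spec (Nat.zero_le _) ⟨x, x, nil, by simp, rfl⟩
  obtain rfl : u = v := by
    by_contra huv
    obtain ⟨w, huw, hnew⟩ := hp.exists_adj_notMem_edges huv (hdeg u)
    have := hmax (cons huw.symm p) ((isTrail_cons _ _).mpr ⟨hp, by rwa [Sym2.eq_swap]⟩)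
    simp only [length_cons] at this
    omega
  refine ⟨u, p, hp.isEulerian_of_forall_mem fun e he => ?_⟩
  by_contra hne
  obtain ⟨y, hy, w, hyw, hnew⟩ := exists_mem_support_adj_notMem_edges hG p he hne
  have hrot := (p.rotate_edges y hy).perm
  have := hmax (cons hyw.symm (p.rotate y hy)) ((isTrail_cons _ _).mpr
    ⟨hp.rotate hy, by rwa [Sym2.eq_swap, hrot.mem_iff]⟩)
  simp only [length_cons, length_rotate] at this
  omega

namespace Walk

def alternatingLabeling {u v : V} (p : G.Walk u v) (e : Sym2 V) : Fin 2 :=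
  if Even (p.edges.idxOf e) then 0 else 1

theorem IsTrail.countP_alternatingLabeling_sub {u v : V} {p : G.Walk u v} (hp : p.IsTrail)
    (x : V) :
    (p.edges.countP (fun e => x ∈ e ∧ p.alternatingLabeling e = 0) : ℤ) -
        p.edges.countP (fun e => x ∈ e ∧ p.alternatingLabeling e = 1) =
      (if x = u then 1 else 0) - (-1) ^ p.length * (if x = v then 1 else 0) := by
  induction p with
  | nil => simp
  | @cons u u' v h q ih =>
    rw [isTrail_cons] at hp
    have hfirst : (cons h q).alternatingLabeling s(u, u') = 0 := by
      simp [alternatingLabeling]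
    have hshift (e : Sym2 V) (he : e ∈ q.edges) :
        (cons h q).alternatingLabeling e = q.alternatingLabeling e + 1 := by
      have hne : s(u, u') ≠ e := fun h' => hp.2 (h' ▸ he)
      simp only [alternatingLabeling, edges_cons, List.idxOf_cons_ne _ hne, Nat.even_add_one]
      by_cases heven : Even (q.edges.idxOf e) <;> simp [heven]
    have hflip : ∀ a : Fin 2, (a + 1 = 0 ↔ a = 1) ∧ (a + 1 = 1 ↔ a = 0) := by decide
    have hcount0 : q.edges.countP (fun e => x ∈ e ∧ (cons h q).alternatingLabeling e = 0) =
        q.edges.countP (fun e => x ∈ e ∧ q.alternatingLabeling e = 1) :=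
      List.countP_congr fun e he => by simp only [decide_eq_true_eq, hshift e he, (hflip _).1]
    have hcount1 : q.edges.countP (fun e => x ∈ e ∧ (cons h q).alternatingLabeling e = 1) =
        q.edges.countP (fun e => x ∈ e ∧ q.alternatingLabeling e = 0) :=
      List.countP_congr fun e he => by simp only [decide_eq_true_eq, hshift e he, (hflip _).2]
    have hmem : (if x ∈ s(u, u') then 1 else 0 : ℤ) =
        (if x = u then 1 else 0) + (if x = u' then 1 else 0) := by
      by_cases hxu : x = u
      · simp [hxu, h.ne]
      · simp [hxu]
    simp only [edges_cons, List.countP_cons, hcount0, hcount1, hfirst, and_true,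
      zero_ne_one, and_false, decide_eq_true_eq, if_false, length_cons]
    push_cast
    rw [hmem]
    linear_combination -ih hp.1

end Walk

def addApex (G : SimpleGraph V) (S : Finset V) : SimpleGraph (Option V) where
  Adj
    | some u, some v => G.Adj u v
    | none, some v | some v, none => v ∈ S
    | none, none => False
  symm := by
    constructor
    rintro (_ | u) (_ | v) h
    exacts [h, h, h, G.symm.symm _ _ h]
  loopless := by
    constructor
    rintro (_ | u) h
    exacts [h, G.loopless.irrefl u h]

variable {S : Finset V}

@[simp] theorem addApex_adj_some_some {u v : V} :
    (G.addApex S).Adj (some u) (some v) ↔ G.Adj u v :=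
  Iff.rfl

@[simp] theorem addApex_adj_none_some {v : V} : (G.addApex S).Adj none (some v) ↔ v ∈ S :=
  Iff.rfl

@[simp] theorem addApex_adj_some_none {v : V} : (G.addApex S).Adj (some v) none ↔ v ∈ S :=
  Iff.rfl

@[simp] theorem not_addApex_adj_none_none : ¬ (G.addApex S).Adj none none :=
  id

theorem Connected.addApex (hG : G.Connected) (hS : S.Nonempty) : (G.addApex S).Connected := by
  have hsome (u v : V) : (G.addApex S).Reachable (some u) (some v) :=
    (hG u v).map (⟨some, id⟩ : G →g G.addApex S)
  obtain ⟨w, hw⟩ := hS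
  have hnone : (G.addApex S).Reachable none (some w) := Adj.reachable hw
  refine ⟨fun a b => ?_⟩
  rcases a with _ | u <;> rcases b with _ | v
  exacts [.rfl, hnone.trans (hsome w v), (hnone.trans (hsome w u)).symm, hsome u v]

variable [Fintype V]

theorem degree_addApex_some (v : V) :
    (G.addApex S).degree (some v) = G.degree v + if v ∈ S then 1 else 0 := by
  rw [← card_neighborFinset_eq_degree, ← card_neighborFinset_eq_degree,
    neighborFinset_eq_filter, neighborFinset_eq_filter, card_filter, card_filter,
    Fintype.sum_option]
  simp [add_comm]

theorem degree_addApex_none :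
    (G.addApex S).degree none = S.card := by
  rw [← card_neighborFinset_eq_degree, neighborFinset_eq_filter, card_filter, Fintype.sum_option]
  simp

theorem even_degree_addApex_odd (a : Option V) :
    Even ((G.addApex {v | Odd (G.degree v)}).degree a) := by
  rcases a with _ | v
  · rw [degree_addApex_none]
    exact G.even_card_odd_degree_vertices
  · rw [degree_addApex_some]
    by_cases hv : Odd (G.degree v)
    · simp [hv]
    · simpa [hv] using Nat.not_odd_iff_even.mp hv

theorem card_edgeFinset_addApex :
    (G.addApex S).edgeFinset.card = G.edgeFinset.card + S.card := by
  have h := (G.addApex S).sum_degrees_eq_twice_card_edges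
  simp only [Fintype.sum_option, degree_addApex_none, degree_addApex_some, sum_add_distrib,
    G.sum_degrees_eq_twice_card_edges, sum_boole, filter_mem_eq_inter, univ_inter, Nat.cast_id] at h
  omega

end SimpleGraph

namespace EdgeLabeling

open SimpleGraph

variable {V : Type*} [Fintype V] {G : SimpleGraph V}

theorem card_nbr_eq_card_filter_incidenceFinset (f : Sym2 V → Fin 2) (i : Fin 2) (v : V) :
    (nbr G f i v).card = ((G.incidenceFinset v).filter (f · = i)).card := by
  rw [← card_map (Sym2.mkEmbedding v)]
  congr 1
  ext e
  simp only [nbr, mem_map, mem_filter, mem_univ, true_and, Sym2.mkEmbedding_apply,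
    mem_incidenceFinset, incidenceSet, Set.mem_ofPred_eq]
  constructor
  · rintro ⟨u, ⟨hadj, hf⟩, rfl⟩
    exact ⟨⟨hadj, Sym2.mem_mk_left v u⟩, hf⟩
  · rintro ⟨⟨he, hve⟩, hf⟩
    obtain ⟨u, rfl⟩ := Sym2.mem_iff_exists.mp hve
    exact ⟨u, ⟨he, hf⟩, rfl⟩

theorem card_nbr_eq_countP {x : V} {p : G.Walk x x} (hp : p.IsEulerian) (f : Sym2 V → Fin 2)
    (i : Fin 2) (v : V) : (nbr G f i v).card = p.edges.countP (fun e => v ∈ e ∧ f e = i) := by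
  rw [card_nbr_eq_card_filter_incidenceFinset, List.countP_eq_length_filter,
    ← List.toFinset_card_of_nodup (hp.isTrail.edges_nodup.filter _)]
  congr 1
  ext e
  simp [hp.mem_edges_iff, incidenceSet, and_assoc]

theorem sum_card_nbr (f : Sym2 V → Fin 2) (i : Fin 2) :
    ∑ v, (nbr G f i v).card = 2 * edgeCount G f i := by
  let H := G.deleteEdges {e | f e ≠ i}
  have hdeg (v : V) : H.degree v = (nbr G f i v).card := by
    rw [← card_neighborFinset_eq_degree]
    congr 1
    ext u
    simp [nbr, H]
  have hedges : H.edgeFinset = G.edgeFinset.filter (f · = i) := by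
    ext e
    simp [H]
  simp only [← hdeg, H.sum_degrees_eq_twice_card_edges, edgeCount, hedges]

theorem unlabeled_iff (f : Sym2 V → Fin 2) (v : V) :
    Unlabeled G f v ↔ (nbr G f 0 v).card = (nbr G f 1 v).card := by
  unfold Unlabeled vertexLabel
  split_ifs <;> simp <;> omega

theorem card_nbr_sub_card_nbr_of_abs_le_one (f : Sym2 V → Fin 2) (v : V)
    (hv : |((nbr G f 0 v).card : ℤ) - (nbr G f 1 v).card| ≤ 1) :
    ((nbr G f 0 v).card : ℤ) - (nbr G f 1 v).card =
      (if vertexLabel G f v = some 0 then 1 else 0) -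
        (if vertexLabel G f v = some 1 then 1 else 0) := by
  rw [abs_le] at hv
  unfold vertexLabel
  split_ifs <;> simp_all <;> omega

theorem two_mul_edgeCount_sub (f : Sym2 V → Fin 2)
    (hf : ∀ v, |((nbr G f 0 v).card : ℤ) - (nbr G f 1 v).card| ≤ 1) :
    2 * ((edgeCount G f 0 : ℤ) - edgeCount G f 1) =
      (vertexCount G f 0 : ℤ) - vertexCount G f 1 := by
  have hsum (i : Fin 2) : (2 * edgeCount G f i : ℤ) = ∑ v, ((nbr G f i v).card : ℤ) := by
    exact_mod_cast (sum_card_nbr f i).symm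
  simp only [mul_sub, hsum, vertexCount, card_filter, Nat.cast_sum, ← sum_sub_distrib,
    card_nbr_sub_card_nbr_of_abs_le_one f _ (hf _)]
  push_cast
  rfl

theorem card_nbr_addApex_some {S : Finset V} (f : Sym2 (Option V) → Fin 2) (i : Fin 2)
    (v : V) :
    (nbr (G.addApex S) f i (some v)).card =
      (nbr G (fun e => f (e.map some)) i v).card +
        if v ∈ S ∧ f s(none, some v) = i then 1 else 0 := by
  simp only [nbr, card_filter]
  simp only [Fintype.sum_option, addApex_adj_some_none, addApex_adj_some_some, Sym2.map_mk]
  rw [add_comm, Sym2.eq_swap]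
  congr 1

theorem card_nbr_addApex_none {S : Finset V} (f : Sym2 (Option V) → Fin 2) (i : Fin 2) :
    (nbr (G.addApex S) f i none).card = (S.filter fun v => f s(none, some v) = i).card := by
  simp only [nbr, card_filter, Fintype.sum_option, addApex_adj_none_some, not_addApex_adj_none_none,
    if_false, zero_add, ite_and, sum_ite_mem, univ_inter]

theorem exists_forall_card_nbr_eq (hG : G.Connected) (hdeg : ∀ v, Even (G.degree v))
    (hsize : Even G.edgeFinset.card) :
    ∃ f : Sym2 V → Fin 2, ∀ v, (nbr G f 0 v).card = (nbr G f 1 v).card := by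
  obtain ⟨u, p, hp⟩ := hG.exists_isEulerian_of_even_degree hdeg
  have hlen : p.length = G.edgeFinset.card := by
    rw [← p.length_edges, ← hp.edgesFinset_eq]
    rfl
  refine ⟨p.alternatingLabeling, fun v => ?_⟩
  have h := hp.isTrail.countP_alternatingLabeling_sub v
  rw [hlen, hsize.neg_one_pow, one_mul, sub_self] at h
  rw [card_nbr_eq_countP hp, card_nbr_eq_countP hp]
  omega

theorem vertexLabel_eq_some_iff (f : Sym2 V → Fin 2) (i : Fin 2) (v : V) :
    vertexLabel G f v = some i ↔ (nbr G f (i + 1) v).card < (nbr G f i v).card := by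
  unfold vertexLabel
  fin_cases i <;> split_ifs <;> simp <;> omega

structure IsNearlyBalanced (G : SimpleGraph V) (f : Sym2 V → Fin 2) : Prop where
  abs_card_nbr_sub_le : ∀ v, |((nbr G f 0 v).card : ℤ) - (nbr G f 1 v).card| ≤ 1
  unlabeled_of_even_degree : ∀ v, Even (G.degree v) → Unlabeled G f v
  vertexCount_eq : vertexCount G f 0 = vertexCount G f 1

theorem IsNearlyBalanced.edgeCount_eq {f : Sym2 V → Fin 2} (hf : IsNearlyBalanced G f) :
    edgeCount G f 0 = edgeCount G f 1 := by
  have h := two_mul_edgeCount_sub f hf.abs_card_nbr_sub_le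
  rw [hf.vertexCount_eq, sub_self] at h
  omega

theorem isNearlyBalanced_of_forall_card_nbr_eq {f : Sym2 V → Fin 2}
    (hf : ∀ v, (nbr G f 0 v).card = (nbr G f 1 v).card) : IsNearlyBalanced G f where
  abs_card_nbr_sub_le v := by simp [hf v]
  unlabeled_of_even_degree v _ := (unlabeled_iff f v).mpr (hf v)
  vertexCount_eq := by
    have hnone (v : V) : vertexLabel G f v = none := (unlabeled_iff f v).mpr (hf v)
    simp [vertexCount, hnone]

theorem exists_isNearlyBalanced_of_exists_odd_degree (hG : G.Connected)
    (hsize : Even G.edgeFinset.card) (hodd : ∃ v, Odd (G.degree v)) :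
    ∃ f : Sym2 V → Fin 2, IsNearlyBalanced G f := by
  set S : Finset V := {v | Odd (G.degree v)}
  obtain ⟨g, hg⟩ := exists_forall_card_nbr_eq (G := G.addApex S)
    (hG.addApex (by simpa [S, Finset.Nonempty] using hodd)) even_degree_addApex_odd
    (by rw [card_edgeFinset_addApex]; exact hsize.add G.even_card_odd_degree_vertices)
  set f : Sym2 V → Fin 2 := fun e => g (e.map some)
  have hbal (v : V) : (nbr G f 0 v).card + (if v ∈ S ∧ g s(none, some v) = 0 then 1 else 0) =
      (nbr G f 1 v).card + (if v ∈ S ∧ g s(none, some v) = 1 then 1 else 0) := by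
    rw [← card_nbr_addApex_some, ← card_nbr_addApex_some]
    exact hg (some v)
  have hlabel (v : V) (i : Fin 2) :
      vertexLabel G f v = some i ↔ v ∈ S ∧ g s(none, some v) = i + 1 := by
    have h := hbal v
    rw [vertexLabel_eq_some_iff]
    generalize g s(none, some v) = a at h ⊢
    by_cases hS : v ∈ S <;> fin_cases a <;> fin_cases i <;> simp_all <;> omega
  refine ⟨f, ⟨fun v => ?_, fun v hv => ?_, ?_⟩⟩
  · have h := hbal v
    rw [abs_le]
    split_ifs at h <;> omega
  · have hvS : v ∉ S := by simpa [S] using hv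
    simpa [hvS, ← unlabeled_iff] using hbal v
  · have hcount (i : Fin 2) : vertexCount G f i = (nbr (G.addApex S) g (i + 1) none).card := by
      rw [vertexCount, card_nbr_addApex_none]
      congr 1
      ext v
      simp [hlabel]
    rw [hcount, hcount]
    exact (hg none).symm

end EdgeLabeling

open EdgeLabeling

/-- Every simple connected graph of even size admits an
edge-friendly labeling with `e_f(0) = e_f(1)` and `|v_f(0) - v_f(1)| ≤ 1`
under which every vertex of even degree is unlabeled. -/
theorem connected_even_size_even_degree_unlabeled
    {V : Type*} [Fintype V] (G : SimpleGraph V)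
    (hconn : G.Connected) (hsize : Even G.edgeFinset.card) :
    ∃ f : Sym2 V → Fin 2, EdgeFriendly G f ∧
      edgeCount G f 0 = edgeCount G f 1 ∧
      |(vertexCount G f 0 : ℤ) - (vertexCount G f 1 : ℤ)| ≤ 1 ∧
      ∀ v : V, Even (G.degree v) → Unlabeled G f v := by
  obtain ⟨f, hf⟩ : ∃ f, IsNearlyBalanced G f := by
    by_cases hodd : ∃ v, Odd (G.degree v)
    · exact exists_isNearlyBalanced_of_exists_odd_degree hconn hsize hodd
    · have hdeg (v : V) : Even (G.degree v) := Nat.not_odd_iff_even.mp (not_exists.mp hodd v)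
      obtain ⟨f, hf⟩ := exists_forall_card_nbr_eq hconn hdeg hsize
      exact ⟨f, isNearlyBalanced_of_forall_card_nbr_eq hf⟩
  have he := hf.edgeCount_eq
  exact ⟨f, by simp [EdgeFriendly, he], he, by simp [hf.vertexCount_eq],
    hf.unlabeled_of_even_degree⟩
end
end

section
/- For every integer n ≥ 3, the path P_n on n vertices is not opinionated; that is, every edge-friendly binary edge labeling of the path on n vertices leaves at least one vertex unlabeled under the induced partial vertex labeling. -/
/-!
Edge-friendly labelings (Krop, Lee, Raridan).  A binary edge labeling of a
graph `G` is `f : Sym2 V → Fin 2` (only its values on edges matter).  For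
`i : Fin 2`, `nbr G f i v` is the set `N_i(v)` of neighbors of `v` joined to
`v` by an `i`-edge, `edgeCount G f i` is `e_f(i)`, and `vertexLabel G f v` is
the induced partial vertex label `f⁺(v)` (with `none` meaning unlabeled).
-/

open Finset

attribute [local instance] Classical.propDecidable

noncomputable section

open EdgeLabeling

/-! An interior vertex of a path has degree two, so it is labeled only if its two edges carry the
same label. If every vertex were labeled, the label would propagate along the path and all
`n - 1 ≥ 2` edges would carry it, which no edge-friendly labeling allows. -/

namespace EdgeLabeling

section

variable {V : Type*} [Fintype V] (G : SimpleGraph V) (f : Sym2 V → Fin 2)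

theorem unlabeled_iff_card_nbr_eq (v : V) :
    Unlabeled G f v ↔ #(nbr G f 0 v) = #(nbr G f 1 v) := by
  unfold Unlabeled vertexLabel
  split_ifs <;> simp only [false_iff, true_iff] <;> omega

theorem edgeCount_zero_add_edgeCount_one :
    edgeCount G f 0 + edgeCount G f 1 = #G.edgeFinset := by
  have h1 : ∀ e : Sym2 V, f e = 1 ↔ ¬ f e = 0 := fun e => by omega
  simp only [edgeCount, h1]
  exact card_filter_add_card_filter_not _

theorem not_edgeFriendly_of_forall_edge_label_eq {c : Fin 2}
    (hc : ∀ e ∈ G.edgeSet, f e = c) (hE : 2 ≤ #G.edgeFinset) : ¬ EdgeFriendly G f := by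
  have hcount : edgeCount G f c = #G.edgeFinset :=
    congrArg card (filter_true_of_mem fun e he => hc e (G.mem_edgeFinset.1 he))
  have hsum := edgeCount_zero_add_edgeCount_one G f
  unfold EdgeFriendly
  rw [abs_le]
  obtain rfl | rfl : c = 0 ∨ c = 1 := by omega
  all_goals omega

variable {G f}

theorem nbr_eq_singleton {v a b : V} (hadj : ∀ u, G.Adj v u ↔ u = a ∨ u = b)
    {i : Fin 2} (ha : f s(v, a) = i) (hb : f s(v, b) ≠ i) : nbr G f i v = {a} := by
  ext u
  simp only [nbr, mem_filter, mem_univ, true_and, mem_singleton, hadj u]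
  constructor
  · rintro ⟨rfl | rfl, hu⟩
    · rfl
    · exact absurd hu hb
  · rintro rfl
    exact ⟨Or.inl rfl, ha⟩

theorem edge_label_eq_of_not_unlabeled {v a b : V} (hadj : ∀ u, G.Adj v u ↔ u = a ∨ u = b)
    (hv : ¬ Unlabeled G f v) : f s(v, a) = f s(v, b) := by
  by_contra hne
  have hnbr_a := nbr_eq_singleton hadj rfl (Ne.symm hne)
  have hnbr_b := nbr_eq_singleton (fun u => (hadj u).trans or_comm) rfl hne
  have hcard : ∀ k : Fin 2, #(nbr G f k v) = 1 := by
    intro k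
    obtain rfl | rfl : k = f s(v, a) ∨ k = f s(v, b) := by omega
    · rw [hnbr_a, card_singleton]
    · rw [hnbr_b, card_singleton]
  exact hv ((unlabeled_iff_card_nbr_eq G f v).2 ((hcard 0).trans (hcard 1).symm))

end

open SimpleGraph

theorem pathGraph_adj_iff_of_interior {n k : ℕ} (hk : k + 2 < n) (u : Fin n) :
    (pathGraph n).Adj ⟨k + 1, by omega⟩ u ↔ u = ⟨k, by omega⟩ ∨ u = ⟨k + 2, hk⟩ := by
  simp only [pathGraph_adj, Fin.ext_iff]
  omega

theorem pathGraph_two_le_card_edgeFinset {n : ℕ} (hn : 3 ≤ n) :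
    2 ≤ #(pathGraph n).edgeFinset := by
  let e₀ : Sym2 (Fin n) := s(⟨0, by omega⟩, ⟨1, by omega⟩)
  let e₁ : Sym2 (Fin n) := s(⟨1, by omega⟩, ⟨2, by omega⟩)
  have hne : e₀ ≠ e₁ := by simp [e₀, e₁, Fin.ext_iff]
  have hsub : {e₀, e₁} ⊆ (pathGraph n).edgeFinset := by
    simp [insert_subset_iff, e₀, e₁, pathGraph_adj]
  simpa [card_pair hne] using card_le_card hsub

variable {n : ℕ} {f : Sym2 (Fin n) → Fin 2}

theorem pathGraph_label_succ_eq_label_zero_one (hf : ∀ v, ¬ Unlabeled (pathGraph n) f v) :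
    ∀ k (hk : k + 1 < n), f s(⟨k, by omega⟩, ⟨k + 1, hk⟩) = f s(⟨0, by omega⟩, ⟨1, by omega⟩)
  | 0, _ => rfl
  | k + 1, hk => by
    have h := edge_label_eq_of_not_unlabeled (pathGraph_adj_iff_of_interior hk) (hf _)
    rw [Sym2.eq_swap] at h
    rw [← pathGraph_label_succ_eq_label_zero_one hf k (by omega), ← h]

theorem pathGraph_label_eq_label_zero_one (hf : ∀ v, ¬ Unlabeled (pathGraph n) f v)
    (hn : 2 ≤ n) :
    ∀ e ∈ (pathGraph n).edgeSet, f e = f s(⟨0, by omega⟩, ⟨1, by omega⟩) := by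
  intro e he
  induction e with | _ u v =>
  rcases pathGraph_adj.1 he with h | h
  · have huv := pathGraph_label_succ_eq_label_zero_one hf u (h ▸ v.isLt)
    rwa [show (⟨u + 1, _⟩ : Fin n) = v from Fin.ext h] at huv
  · have hvu := pathGraph_label_succ_eq_label_zero_one hf v (h ▸ u.isLt)
    rwa [show (⟨v + 1, _⟩ : Fin n) = u from Fin.ext h, Sym2.eq_swap] at hvu

end EdgeLabeling

/-- For every `n ≥ 3`, the path `P_n` on `n` vertices is not
opinionated: every edge-friendly labeling of the path leaves at least one
vertex unlabeled. -/
theorem pathGraph_not_opinionated (n : ℕ) (hn : 3 ≤ n) :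
    ¬ Opinionated (SimpleGraph.pathGraph n) ∧
      ∀ f : Sym2 (Fin n) → Fin 2, EdgeFriendly (SimpleGraph.pathGraph n) f →
        ∃ v : Fin n, Unlabeled (SimpleGraph.pathGraph n) f v := by
  have key : ∀ f : Sym2 (Fin n) → Fin 2, EdgeFriendly (SimpleGraph.pathGraph n) f →
      ∃ v : Fin n, Unlabeled (SimpleGraph.pathGraph n) f v := by
    intro f hf
    by_contra! hlabeled
    exact not_edgeFriendly_of_forall_edge_label_eq _ f
      (pathGraph_label_eq_label_zero_one hlabeled (by omega))
      (pathGraph_two_le_card_edgeFinset hn) hf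
  refine ⟨fun ⟨f, hf, hlabeled⟩ => ?_, key⟩
  obtain ⟨v, hv⟩ := key f hf
  exact hlabeled v hv
end
end

section
/- Let f be an edge-friendly binary edge labeling of the complete graph K_n (n ≥ 3), let v be a vertex that is unlabeled under the induced partial vertex labeling, and let u₁, u₂ ∈ N_0(v) with f(u₁u₂) = 1. Suppose |N_0(u₁)| ≥ |N_1(u₁)| + 2. Let g be the labeling obtained from f by switching the labels on the edges vu₂ and u₁u₂ (so g(vu₂) = 1, g(u₁u₂) = 0, and g agrees with f on all other edges). Then g is edge-friendly, g⁺(v) = 1, and g⁺(w) = f⁺(w) for every vertex w ≠ v (in particular, the induced labels of u₁ and u₂ are unchanged). -/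
/-!
Edge-friendly labelings (Krop, Lee, Raridan).  A binary edge labeling of a
graph `G` is `f : Sym2 V → Fin 2` (only its values on edges matter).  For
`i : Fin 2`, `nbr G f i v` is the set `N_i(v)` of neighbors of `v` joined to
`v` by an `i`-edge, `edgeCount G f i` is `e_f(i)`, and `vertexLabel G f v` is
the induced partial vertex label `f⁺(v)` (with `none` meaning unlabeled).
-/

open Finset

attribute [local instance] Classical.propDecidable

noncomputable section

/-!
Switching `vu₂` from `0` to `1` and `u₁u₂` from `1` to `0` trades a `0`-edge for a `1`-edge, so
the edge counts do not change. A vertex only sees the switched edges it lies on: at `u₂` the two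
changes cancel, at `v` one `0`-neighbour becomes a `1`-neighbour, which breaks the tie in favour
of `1`, and at `u₁` one `1`-neighbour becomes a `0`-neighbour, which only widens the majority
of `0`.
-/

namespace EdgeLabeling

open Function

variable {V : Type*} [Fintype V] {G : SimpleGraph V} {f : Sym2 V → Fin 2}

theorem mem_nbr {i : Fin 2} {v u : V} : u ∈ nbr G f i v ↔ G.Adj v u ∧ f s(v, u) = i := by
  simp [nbr]

theorem vertexLabel_eq_zero {w : V} (h : #(nbr G f 1 w) < #(nbr G f 0 w)) :
    vertexLabel G f w = some 0 :=
  if_pos h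

theorem vertexLabel_eq_one {w : V} (h : #(nbr G f 0 w) < #(nbr G f 1 w)) :
    vertexLabel G f w = some 1 := by
  rw [vertexLabel, if_neg h.not_gt, if_pos h]

theorem vertexLabel_eq_of_card_nbr_eq {g : Sym2 V → Fin 2} {w : V}
    (h₀ : #(nbr G g 0 w) = #(nbr G f 0 w)) (h₁ : #(nbr G g 1 w) = #(nbr G f 1 w)) :
    vertexLabel G g w = vertexLabel G f w := by
  simp only [vertexLabel, h₀, h₁]

theorem Unlabeled.card_nbr_eq {w : V} (hw : Unlabeled G f w) :
    #(nbr G f 0 w) = #(nbr G f 1 w) := by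
  unfold Unlabeled vertexLabel at hw
  split_ifs at hw with h₁ h₀
  omega

variable [DecidableEq V]

theorem nbr_update_of_notMem {e : Sym2 V} {w : V} (hw : w ∉ e) (i j : Fin 2) :
    nbr G (update f e i) j w = nbr G f j w := by
  ext u
  have hne : s(w, u) ≠ e := fun h => hw (h ▸ Sym2.mem_mk_left w u)
  simp only [mem_nbr, update_of_ne hne]

theorem nbr_update_self {a b : V} (hab : G.Adj a b) (i : Fin 2) :
    nbr G (update f s(a, b) i) i a = insert b (nbr G f i a) := by
  ext u
  by_cases hu : u = b
  · subst hu
    simp [mem_nbr, hab]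
  · simp [mem_nbr, hu, update_of_ne (Sym2.congr_right.not.2 hu)]

theorem nbr_update_of_ne {a b : V} {i j : Fin 2} (hij : i ≠ j) :
    nbr G (update f s(a, b) i) j a = (nbr G f j a).erase b := by
  ext u
  by_cases hu : u = b
  · subst hu
    simp [mem_nbr, hij]
  · simp [mem_nbr, hu, update_of_ne (Sym2.congr_right.not.2 hu)]

theorem card_nbr_update_self {a b : V} {i j : Fin 2} (hab : G.Adj a b) (hf : f s(a, b) = j)
    (hij : i ≠ j) : #(nbr G (update f s(a, b) i) i a) = #(nbr G f i a) + 1 := by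
  rw [nbr_update_self hab, card_insert_of_notMem fun h => hij ((mem_nbr.1 h).2.symm.trans hf)]

theorem card_nbr_update_of_ne {a b : V} {i j : Fin 2} (hab : G.Adj a b) (hf : f s(a, b) = j)
    (hij : i ≠ j) : #(nbr G (update f s(a, b) i) j a) + 1 = #(nbr G f j a) := by
  rw [nbr_update_of_ne hij, card_erase_add_one (mem_nbr.2 ⟨hab, hf⟩)]

theorem edgeCount_update_self {e : Sym2 V} {i j : Fin 2} (he : e ∈ G.edgeSet) (hf : f e = j)
    (hij : i ≠ j) : edgeCount G (update f e i) i = edgeCount G f i + 1 := by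
  have : G.edgeFinset.filter (fun e' => update f e i e' = i) =
      insert e (G.edgeFinset.filter fun e' => f e' = i) := by
    ext e'
    by_cases h : e' = e
    · subst h
      simpa using he
    · simp [h]
  rw [edgeCount, this, card_insert_of_notMem (by simp [hf, hij.symm]), edgeCount]

theorem edgeCount_update_of_ne {e : Sym2 V} {i j : Fin 2} (he : e ∈ G.edgeSet) (hf : f e = j)
    (hij : i ≠ j) : edgeCount G (update f e i) j + 1 = edgeCount G f j := by
  have : G.edgeFinset.filter (fun e' => update f e i e' = j) =
      (G.edgeFinset.filter fun e' => f e' = j).erase e := by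
    ext e'
    by_cases h : e' = e
    · subst h
      simp [hij]
    · simp [h]
  rw [edgeCount, this, card_erase_add_one (by simpa [hf] using he), edgeCount]

def switchLabels (f : Sym2 V → Fin 2) (e₀ e₁ : Sym2 V) : Sym2 V → Fin 2 :=
  update (update f e₀ 1) e₁ 0

section switchLabels

variable {e₀ e₁ : Sym2 V}

theorem edgeCount_switchLabels (he₀ : e₀ ∈ G.edgeSet) (he₁ : e₁ ∈ G.edgeSet) (hf₀ : f e₀ = 0)
    (hf₁ : f e₁ = 1) (i : Fin 2) : edgeCount G (switchLabels f e₀ e₁) i = edgeCount G f i := by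
  have hf₁' : update f e₀ 1 e₁ = 1 := by
    rwa [update_of_ne (fun h => by simp [h, hf₀] at hf₁)]
  have h₀₁ := edgeCount_update_self (i := 1) he₀ hf₀ (by decide)
  have h₀₀ := edgeCount_update_of_ne (i := 1) he₀ hf₀ (by decide)
  have h₁₀ := edgeCount_update_self (i := 0) he₁ hf₁' (by decide)
  have h₁₁ := edgeCount_update_of_ne (i := 0) he₁ hf₁' (by decide)
  revert i
  simp only [Fin.forall_fin_two, switchLabels]
  constructor <;> omega

theorem EdgeFriendly.switchLabels (hf : EdgeFriendly G f) (he₀ : e₀ ∈ G.edgeSet)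
    (he₁ : e₁ ∈ G.edgeSet) (hf₀ : f e₀ = 0) (hf₁ : f e₁ = 1) :
    EdgeFriendly G (switchLabels f e₀ e₁) := by
  simpa only [EdgeFriendly, edgeCount_switchLabels he₀ he₁ hf₀ hf₁] using hf

theorem vertexLabel_switchLabels_of_notMem {w : V} (h₀ : w ∉ e₀) (h₁ : w ∉ e₁) :
    vertexLabel G (switchLabels f e₀ e₁) w = vertexLabel G f w := by
  simp only [vertexLabel, switchLabels, nbr_update_of_notMem h₁, nbr_update_of_notMem h₀]

theorem vertexLabel_switchLabels_of_unlabeled {a b : V} (hab : G.Adj a b) (hf : f s(a, b) = 0)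
    (ha : a ∉ e₁) (hu : Unlabeled G f a) :
    vertexLabel G (switchLabels f s(a, b) e₁) a = some 1 := by
  apply vertexLabel_eq_one
  have h₁ := card_nbr_update_self (i := 1) hab hf (by decide)
  have h₀ := card_nbr_update_of_ne (i := 1) hab hf (by decide)
  have := hu.card_nbr_eq
  simp only [switchLabels, nbr_update_of_notMem ha]
  omega

theorem vertexLabel_switchLabels_of_card_nbr_lt {a b : V} (hab : G.Adj a b) (hf : f s(a, b) = 1)
    (ha : a ∉ e₀) (h : #(nbr G f 1 a) < #(nbr G f 0 a)) :
    vertexLabel G (switchLabels f e₀ s(a, b)) a = vertexLabel G f a := by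
  have hf' : update f e₀ 1 s(a, b) = 1 := by
    rwa [update_of_ne (fun h : s(a, b) = e₀ => ha (h ▸ Sym2.mem_mk_left a b))]
  have h₀ := card_nbr_update_self (i := 0) hab hf' (by decide)
  have h₁ := card_nbr_update_of_ne (i := 0) hab hf' (by decide)
  simp only [nbr_update_of_notMem ha] at h₀ h₁
  rw [vertexLabel_eq_zero h, switchLabels, vertexLabel_eq_zero (by omega)]

theorem vertexLabel_switchLabels_of_mem_inter {a b c : V} (hac : G.Adj a c) (hbc : G.Adj b c)
    (ha : f s(a, c) = 0) (hb : f s(b, c) = 1) :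
    vertexLabel G (switchLabels f s(a, c) s(b, c)) c = vertexLabel G f c := by
  rw [Sym2.eq_swap (a := a), Sym2.eq_swap (a := b)] at *
  have hb' : update f s(c, a) 1 s(c, b) = 1 := by
    rwa [update_of_ne (Sym2.congr_right.not.2 fun h => by simp [h, ha] at hb)]
  have h₀₁ := card_nbr_update_self (i := 1) hac.symm ha (by decide)
  have h₀₀ := card_nbr_update_of_ne (i := 1) hac.symm ha (by decide)
  have h₁₀ := card_nbr_update_self (i := 0) hbc.symm hb' (by decide)
  have h₁₁ := card_nbr_update_of_ne (i := 0) hbc.symm hb' (by decide)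
  exact vertexLabel_eq_of_card_nbr_eq (by rw [switchLabels]; omega) (by rw [switchLabels]; omega)

end switchLabels

end EdgeLabeling

open EdgeLabeling

theorem switch_labels_vertex_becomes_labeled_general (n : ℕ)
    (f : Sym2 (Fin n) → Fin 2) (hf : EdgeFriendly (⊤ : SimpleGraph (Fin n)) f)
    (v u₁ u₂ : Fin n) (hv : Unlabeled (⊤ : SimpleGraph (Fin n)) f v)
    (hu₁ : u₁ ∈ nbr (⊤ : SimpleGraph (Fin n)) f 0 v)
    (hu₂ : u₂ ∈ nbr (⊤ : SimpleGraph (Fin n)) f 0 v)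
    (hne : u₁ ≠ u₂) (h12 : f s(u₁, u₂) = 1)
    (hdeg : (nbr (⊤ : SimpleGraph (Fin n)) f 1 u₁).card + 2 ≤
      (nbr (⊤ : SimpleGraph (Fin n)) f 0 u₁).card)
    (g : Sym2 (Fin n) → Fin 2)
    (hg : g = Function.update (Function.update f s(v, u₂) 1) s(u₁, u₂) 0) :
    EdgeFriendly (⊤ : SimpleGraph (Fin n)) g ∧
      vertexLabel (⊤ : SimpleGraph (Fin n)) g v = some 1 ∧
      ∀ w : Fin n, w ≠ v →
        vertexLabel (⊤ : SimpleGraph (Fin n)) g w =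
          vertexLabel (⊤ : SimpleGraph (Fin n)) f w := by
  obtain ⟨hvu₁, -⟩ := mem_nbr.1 hu₁
  obtain ⟨hvu₂, hfvu₂⟩ := mem_nbr.1 hu₂
  have hu₁u₂ : (⊤ : SimpleGraph (Fin n)).Adj u₁ u₂ := hne
  have hv_notMem : v ∉ s(u₁, u₂) := by simp [hvu₁.ne, hvu₂.ne]
  have hu₁_notMem : u₁ ∉ s(v, u₂) := by simp [hvu₁.ne.symm, hne]
  change g = switchLabels f s(v, u₂) s(u₁, u₂) at hg
  subst hg
  refine ⟨hf.switchLabels hvu₂ hu₁u₂ hfvu₂ h12,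
    vertexLabel_switchLabels_of_unlabeled hvu₂ hfvu₂ hv_notMem hv, fun w hwv => ?_⟩
  by_cases hw₁ : w = u₁
  · subst hw₁
    exact vertexLabel_switchLabels_of_card_nbr_lt hu₁u₂ h12 hu₁_notMem (by omega)
  by_cases hw₂ : w = u₂
  · subst hw₂
    exact vertexLabel_switchLabels_of_mem_inter hvu₂ hu₁u₂ hfvu₂ h12
  exact vertexLabel_switchLabels_of_notMem (by simp [hwv, hw₂]) (by simp [hw₁, hw₂])

/-- In `K_n` (`n ≥ 3`), let `f` be edge-friendly, `v`
unlabeled, `u₁, u₂ ∈ N_0(v)` with `f(u₁u₂) = 1`, and suppose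
`|N_0(u₁)| ≥ |N_1(u₁)| + 2`.  Switching the labels on `vu₂` and `u₁u₂` yields
an edge-friendly labeling `g` with `g⁺(v) = 1` and `g⁺(w) = f⁺(w)` for all
`w ≠ v`. -/
theorem switch_labels_vertex_becomes_labeled (n : ℕ) (hn : 3 ≤ n)
    (f : Sym2 (Fin n) → Fin 2) (hf : EdgeFriendly (⊤ : SimpleGraph (Fin n)) f)
    (v u₁ u₂ : Fin n) (hv : Unlabeled (⊤ : SimpleGraph (Fin n)) f v)
    (hu₁ : u₁ ∈ nbr (⊤ : SimpleGraph (Fin n)) f 0 v)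
    (hu₂ : u₂ ∈ nbr (⊤ : SimpleGraph (Fin n)) f 0 v)
    (hne : u₁ ≠ u₂) (h12 : f s(u₁, u₂) = 1)
    (hdeg : (nbr (⊤ : SimpleGraph (Fin n)) f 1 u₁).card + 2 ≤
      (nbr (⊤ : SimpleGraph (Fin n)) f 0 u₁).card)
    (g : Sym2 (Fin n) → Fin 2)
    (hg : g = Function.update (Function.update f s(v, u₂) 1) s(u₁, u₂) 0) :
    EdgeFriendly (⊤ : SimpleGraph (Fin n)) g ∧
      vertexLabel (⊤ : SimpleGraph (Fin n)) g v = some 1 ∧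
      ∀ w : Fin n, w ≠ v →
        vertexLabel (⊤ : SimpleGraph (Fin n)) g w =
          vertexLabel (⊤ : SimpleGraph (Fin n)) f w :=
  switch_labels_vertex_becomes_labeled_general n f hf v u₁ u₂ hv hu₁ hu₂ hne h12 hdeg g hg
end
end
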